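/- Let V be a countably infinite set carrying two linear orders ≤₁ and ≤₂ with the joint extension property: for all finite sets A₁, B₁, A₂, B₂ ⊆ V such that a <₁ b for all a ∈ A₁, b ∈ B₁ and a <₂ b for all a ∈ A₂, b ∈ B₂, there exists x ∈ V with a <₁ x for all a ∈ A₁, x <₁ b for all b ∈ B₁, a <₂ x for all a ∈ A₂, and x <₂ b for all b ∈ B₂. Then there exists a sequence (aₙ)ₙ∈ℕ of elements of V that is strictly increasing in the order ≤₁ and is dense in the order ≤₂, i.e., for all b <₂ c in V there exists n with b <₂ aₙ <₂ c. -/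

import Mathlib

/-!
Enumerate all pairs `(b, c)` as `e 0, e 1, …` and choose the terms one at a time: by the joint
extension property, the `n`-th term can be taken `<₁`-above the finitely many earlier terms and,
if `b <₂ c` for `(b, c) = e n`, `<₂`-between `b` and `c`.
-/

theorem exists_seq_forall_lt_of_forall_finset {α : Type*} (P : ℕ → α → Prop)
    (r : α → α → Prop) (h : ∀ n (s : Finset α), ∃ y, P n y ∧ ∀ x ∈ s, r x y) :
    ∃ f : ℕ → α, (∀ n, P n (f n)) ∧ ∀ m n, m < n → r (f m) (f n) := by
  classical
  choose F hF using h
  let earlier : ℕ → Finset α := fun n => Nat.rec ∅ (fun k s => insert (F k s) s) n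
  have mem_earlier : ∀ m n, m < n → F m (earlier m) ∈ earlier n := by
    intro m n hmn
    induction n with
    | zero => omega
    | succ n ih =>
      rcases Nat.lt_succ_iff_lt_or_eq.mp hmn with hlt | rfl
      · exact Finset.mem_insert_of_mem (ih hlt)
      · exact Finset.mem_insert_self _ _
  exact ⟨fun n => F n (earlier n), fun n => (hF n _).1,
    fun m n hmn => (hF n _).2 _ (mem_earlier m n hmn)⟩

section JointExtension

variable {V : Type*} (le₁ le₂ : V → V → Prop)

def HasJointExtension : Prop :=
  ∀ A₁ B₁ A₂ B₂ : Finset V,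
    (∀ a ∈ A₁, ∀ b ∈ B₁, le₁ a b ∧ a ≠ b) →
    (∀ a ∈ A₂, ∀ b ∈ B₂, le₂ a b ∧ a ≠ b) →
    ∃ x, (∀ a ∈ A₁, le₁ a x ∧ a ≠ x) ∧ (∀ b ∈ B₁, le₁ x b ∧ x ≠ b) ∧
         (∀ a ∈ A₂, le₂ a x ∧ a ≠ x) ∧ (∀ b ∈ B₂, le₂ x b ∧ x ≠ b)

variable {le₁ le₂}

theorem HasJointExtension.nonempty (hext : HasJointExtension le₁ le₂) : Nonempty V :=
  let ⟨x, _⟩ := hext ∅ ∅ ∅ ∅ (by simp) (by simp)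
  ⟨x⟩

theorem HasJointExtension.exists_between_above (hext : HasJointExtension le₁ le₂) (b c : V)
    (s : Finset V) :
    ∃ x, (le₂ b c ∧ b ≠ c → (le₂ b x ∧ b ≠ x) ∧ (le₂ x c ∧ x ≠ c)) ∧
      ∀ a ∈ s, le₁ a x ∧ a ≠ x := by
  by_cases hbc : le₂ b c ∧ b ≠ c
  · obtain ⟨x, hs, -, hb, hc⟩ := hext s ∅ {b} {c} (by simp) (by simpa using hbc)
    exact ⟨x, fun _ => ⟨hb b (by simp), hc c (by simp)⟩, hs⟩
  · obtain ⟨x, hs, -⟩ := hext s ∅ ∅ ∅ (by simp) (by simp)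
    exact ⟨x, fun h => absurd h hbc, hs⟩

end JointExtension

theorem double_rationals_increasing_dense_sequence_general
    (V : Type*) [Countable V]
    (le₁ le₂ : V → V → Prop)
    (hext : ∀ A₁ B₁ A₂ B₂ : Finset V,
      (∀ a ∈ A₁, ∀ b ∈ B₁, le₁ a b ∧ a ≠ b) →
      (∀ a ∈ A₂, ∀ b ∈ B₂, le₂ a b ∧ a ≠ b) →
      ∃ x, (∀ a ∈ A₁, le₁ a x ∧ a ≠ x) ∧ (∀ b ∈ B₁, le₁ x b ∧ x ≠ b) ∧
           (∀ a ∈ A₂, le₂ a x ∧ a ≠ x) ∧ (∀ b ∈ B₂, le₂ x b ∧ x ≠ b)) :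
    ∃ a : ℕ → V,
      (∀ m k : ℕ, m < k → le₁ (a m) (a k) ∧ a m ≠ a k) ∧
      ∀ b c : V, le₂ b c ∧ b ≠ c →
        ∃ k : ℕ, (le₂ b (a k) ∧ b ≠ a k) ∧ (le₂ (a k) c ∧ a k ≠ c) := by
  have hext : HasJointExtension le₁ le₂ := hext
  have := hext.nonempty
  obtain ⟨e, he⟩ := exists_surjective_nat (V × V)
  obtain ⟨a, hdense, hmono⟩ := exists_seq_forall_lt_of_forall_finset _ _
    fun n => hext.exists_between_above (e n).1 (e n).2
  refine ⟨a, hmono, fun b c hbc => ?_⟩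
  obtain ⟨n, hn⟩ := he (b, c)
  have hbetween := hdense n
  rw [hn] at hbetween
  exact ⟨n, hbetween hbc⟩

/-- In the double rationals (two linear orders with the joint extension
property) there is a sequence strictly increasing in `≤₁` and dense in `≤₂`. -/
theorem double_rationals_increasing_dense_sequence
    (V : Type*) [Countable V] [Infinite V]
    (le₁ le₂ : V → V → Prop)
    (h₁ : IsLinearOrder V le₁) (h₂ : IsLinearOrder V le₂)
    (hext : ∀ A₁ B₁ A₂ B₂ : Finset V,
      (∀ a ∈ A₁, ∀ b ∈ B₁, le₁ a b ∧ a ≠ b) →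
      (∀ a ∈ A₂, ∀ b ∈ B₂, le₂ a b ∧ a ≠ b) →
      ∃ x, (∀ a ∈ A₁, le₁ a x ∧ a ≠ x) ∧ (∀ b ∈ B₁, le₁ x b ∧ x ≠ b) ∧
           (∀ a ∈ A₂, le₂ a x ∧ a ≠ x) ∧ (∀ b ∈ B₂, le₂ x b ∧ x ≠ b)) :
    ∃ a : ℕ → V,
      (∀ m k : ℕ, m < k → le₁ (a m) (a k) ∧ a m ≠ a k) ∧
      ∀ b c : V, le₂ b c ∧ b ≠ c →
        ∃ k : ℕ, (le₂ b (a k) ∧ b ≠ a k) ∧ (le₂ (a k) c ∧ a k ≠ c) :=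
  double_rationals_increasing_dense_sequence_general V le₁ le₂ hext
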